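/- (Extended SSSI constraint implies restricted TU.) Let w be a 0-1 matrix with r rows and m columns. Suppose there exist a natural number l, a map g : Fin r → Fin l assigning each row to a group, and pairwise disjoint sets S₁, …, S_l ⊆ Fin m, such that for all row indices k and column indices j: w_{k j} = 1 if and only if j ∈ S_{g(k)}. Then w is restrictedly TU. -/

import Mathlib

/-!
Up to repeating rows, which cannot create new minors, `w` is the indicator matrix of the
pairwise disjoint sets `S a`: a 0-1 matrix with at most one nonzero entry per column, whose
transpose is totally unimodular because its rows are unit vectors or zero. In a square submatrix
that meets the all-ones row, subtracting the other rows from that row keeps the determinant and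
leaves the indicator of the columns they do not cover, so the column property is restored.
-/

/-- A matrix is totally unimodular if every square submatrix has determinant `0`, `1`, or `-1`. -/
def IsTU {α β : Type*} (A : Matrix α β ℤ) : Prop :=
  ∀ (k : ℕ) (f : Fin k → α) (g : Fin k → β),
    Function.Injective f → Function.Injective g →
      (A.submatrix f g).det = 0 ∨ (A.submatrix f g).det = 1 ∨ (A.submatrix f g).det = -1

/-- A 0-1 matrix `w` is restrictedly TU if the matrix obtained by appending the all-ones row
to `w` is totally unimodular. -/
def RestrictedTU {r m : ℕ} (w : Matrix (Fin r) (Fin m) ℤ) : Prop :=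
  IsTU (Matrix.fromRows w (Matrix.of fun (_ : Unit) (_ : Fin m) => (1 : ℤ)))

namespace Matrix

variable {m n R : Type*} [CommRing R]

lemma isTotallyUnimodular_of_zero_one_of_disjoint_rows {A : Matrix m n R}
    (h01 : ∀ i j, A i j = 0 ∨ A i j = 1) (hdisj : ∀ j i i', A i j ≠ 0 → A i' j ≠ 0 → i = i') :
    A.IsTotallyUnimodular := by
  classical
  have hcols : Nonempty m → ∀ j, ∃ i, ∃ s : SignType, Aᵀ j = Pi.single i (s : R) := by
    rintro ⟨i₀⟩ j
    by_cases hj : ∃ i, A i j ≠ 0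
    · obtain ⟨i, hi⟩ := hj
      refine ⟨i, 1, funext fun i' => ?_⟩
      rcases eq_or_ne i' i with rfl | hne
      · simpa using (h01 i' j).resolve_left hi
      · simpa [hne] using not_not.1 fun h => hne (hdisj j i' i h hi)
    · push Not at hj
      exact ⟨i₀, 0, funext fun i' => by simpa using hj i'⟩
  exact (((emptyRows_isTotallyUnimodular (0 : Matrix Empty m R)).fromRows_unitlike hcols).submatrix
      Sum.inr id).transpose

lemma det_mem_range_of_zero_one_of_disjoint_rows [Fintype m] [DecidableEq m] {N : Matrix m m R}
    (h01 : ∀ i j, N i j = 0 ∨ N i j = 1) (hdisj : ∀ j i i', N i j ≠ 0 → N i' j ≠ 0 → i = i') :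
    N.det ∈ Set.range SignType.cast := by
  simpa using (isTotallyUnimodular_iff_fintype N).1
    (isTotallyUnimodular_of_zero_one_of_disjoint_rows h01 hdisj) m id id

lemma det_mem_range_of_row_eq_one [Fintype m] [DecidableEq m] {N : Matrix m m R} {i₀ : m}
    (hi₀ : N i₀ = 1) (h01 : ∀ i ≠ i₀, ∀ j, N i j = 0 ∨ N i j = 1)
    (hdisj : ∀ j i i', i ≠ i₀ → i' ≠ i₀ → N i j ≠ 0 → N i' j ≠ 0 → i = i') :
    N.det ∈ Set.range SignType.cast := by
  -- `e` is the all-ones row minus the other rows: the indicator of the columns they do not cover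
  set e : m → R := fun j => 1 - ∑ i ∈ Finset.univ.erase i₀, N i j
  have hdet : (N.updateRow i₀ e).det = N.det := by
    have := det_updateRow_sum N i₀ fun i => if i = i₀ then 1 else -1
    rw [if_pos rfl, one_smul] at this
    rw [← this]
    congr 2
    ext j
    rw [Finset.sum_apply, ← Finset.add_sum_erase _ _ (Finset.mem_univ i₀),
      Finset.sum_congr rfl fun i hi => by rw [if_neg (Finset.ne_of_mem_erase hi)]]
    simp [e, hi₀, sub_eq_add_neg]
  have he_eq_zero : ∀ j, ∀ i ≠ i₀, N i j ≠ 0 → e j = 0 := by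
    intro j i hi hij
    have hmem : i ∈ Finset.univ.erase i₀ := Finset.mem_erase.2 ⟨hi, Finset.mem_univ i⟩
    rw [sub_eq_zero, Finset.sum_eq_single_of_mem i hmem, (h01 i hi j).resolve_left hij]
    intro i' hi' hne
    exact not_not.1 fun h => hne (hdisj j i' i (Finset.ne_of_mem_erase hi') hi h hij)
  have he_eq_one : ∀ j, (∀ i ≠ i₀, N i j = 0) → e j = 1 := fun j hj =>
    sub_eq_self.2 (Finset.sum_eq_zero fun i hi => hj i (Finset.ne_of_mem_erase hi))
  rw [← hdet]
  refine det_mem_range_of_zero_one_of_disjoint_rows (fun i j => ?_) (fun j i i' hi hi' => ?_)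
  · rcases eq_or_ne i i₀ with rfl | hne
    · rw [updateRow_self]
      by_cases hj : ∃ i' ≠ i, N i' j ≠ 0
      · obtain ⟨i', hi', hi'j⟩ := hj
        exact Or.inl (he_eq_zero j i' hi' hi'j)
      · push Not at hj
        exact Or.inr (he_eq_one j hj)
    · rw [updateRow_ne hne]
      exact h01 i hne j
  · by_cases h : i = i₀ <;> by_cases h' : i' = i₀
    · rw [h, h']
    · rw [h, updateRow_self] at hi
      rw [updateRow_ne h'] at hi'
      exact absurd (he_eq_zero j i' h' hi') hi
    · rw [h', updateRow_self] at hi'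
      rw [updateRow_ne h] at hi
      exact absurd (he_eq_zero j i h hi) hi'
    · rw [updateRow_ne h] at hi
      rw [updateRow_ne h'] at hi'
      exact hdisj j i i' h h' hi hi'

lemma fromRows_replicateRow_one_isTotallyUnimodular {A : Matrix m n R}
    (h01 : ∀ i j, A i j = 0 ∨ A i j = 1) (hdisj : ∀ j i i', A i j ≠ 0 → A i' j ≠ 0 → i = i') :
    (fromRows A (replicateRow Unit 1)).IsTotallyUnimodular := by
  classical
  intro k f g hf _
  set N := (fromRows A (replicateRow Unit 1)).submatrix f g
  have hinl : ∀ i, f i ≠ .inr () → ∃ a, f i = .inl a := fun i hi => by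
    cases h : f i with
    | inl a => exact ⟨a, rfl⟩
    | inr u => exact absurd h hi
  have hN01 : ∀ i, f i ≠ .inr () → ∀ j, N i j = 0 ∨ N i j = 1 := by
    intro i hi j
    obtain ⟨a, ha⟩ := hinl i hi
    simpa [N, ha] using h01 a (g j)
  have hNdisj : ∀ j i i', f i ≠ .inr () → f i' ≠ .inr () → N i j ≠ 0 → N i' j ≠ 0 → i = i' := by
    intro j i i' hi hi' hij hi'j
    obtain ⟨a, ha⟩ := hinl i hi
    obtain ⟨a', ha'⟩ := hinl i' hi'
    simp only [N, submatrix_apply, ha, ha', fromRows_apply_inl] at hij hi'j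
    exact hf (by rw [ha, ha', hdisj _ _ _ hij hi'j])
  by_cases h : ∃ i₀, f i₀ = .inr ()
  · obtain ⟨i₀, hi₀⟩ := h
    have hne : ∀ i ≠ i₀, f i ≠ .inr () := fun i hi h => hi (hf (h.trans hi₀.symm))
    exact det_mem_range_of_row_eq_one (i₀ := i₀) (by ext j; simp [N, hi₀])
      (fun i hi => hN01 i (hne i hi))
      (fun j i i' hi hi' => hNdisj j i i' (hne i hi) (hne i' hi'))
  · push Not at h
    exact det_mem_range_of_zero_one_of_disjoint_rows (fun i => hN01 i (h i))
      (fun j i i' => hNdisj j i i' (h i) (h i'))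

end Matrix

open Matrix

lemma isTU_iff_isTotallyUnimodular {α β : Type*} (A : Matrix α β ℤ) :
    IsTU A ↔ A.IsTotallyUnimodular := by
  simp [IsTU, IsTotallyUnimodular, SignType.range_eq, or_comm]

/-- Extended SSSI constraint implies restricted TU: if the rows of the 0-1 matrix `w` are
assigned to groups by `g` and there are pairwise disjoint column sets `S a` such that
`w_{k j} = 1` iff `j ∈ S (g k)`, then `w` is restrictedly TU. -/
theorem restrictedTU_of_extendedSSSI {r m : ℕ} (w : Matrix (Fin r) (Fin m) ℤ)
    (h01 : ∀ i j, w i j = 0 ∨ w i j = 1)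
    (l : ℕ) (g : Fin r → Fin l) (S : Fin l → Finset (Fin m))
    (hdisj : ∀ a b : Fin l, a ≠ b → Disjoint (S a) (S b))
    (hgroup : ∀ (k : Fin r) (j : Fin m), w k j = 1 ↔ j ∈ S (g k)) :
    RestrictedTU w := by
  classical
  set G : Matrix (Fin l) (Fin m) ℤ := of fun a j => if j ∈ S a then 1 else 0
  have hG_ne_zero : ∀ a j, G a j ≠ 0 ↔ j ∈ S a := by simp [G]
  have hw : w = G.submatrix g id := by
    ext k j
    by_cases hj : j ∈ S (g k)
    · simp [G, hj, (hgroup k j).2 hj]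
    · simpa [G, hj] using (h01 k j).resolve_right (mt (hgroup k j).1 hj)
  have hGTU : (fromRows G (replicateRow Unit 1)).IsTotallyUnimodular :=
    fromRows_replicateRow_one_isTotallyUnimodular (fun a j => by by_cases j ∈ S a <;> simp [G, *])
      fun j a b ha hb => by_contra fun hab =>
        Finset.disjoint_left.1 (hdisj a b hab) ((hG_ne_zero a j).1 ha) ((hG_ne_zero b j).1 hb)
  rw [RestrictedTU, isTU_iff_isTotallyUnimodular, hw]
  convert hGTU.submatrix (Sum.map g id) id using 1
  ext (k | _) j <;> rfl
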